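/- arXiv:math/0510470 — 3 statements merged into one kernel-verified Lean document; each statement's English description precedes it below -/
import Mathlib

section
/- Let □_d = [−1,1]^d be the standard cube of dimension d in ℝ^d. Then for all 0 ≤ k ≤ d−1, the number of k-dimensional faces of the Nesterov rounding □_d + □_d* is f_k(□_d + □_d*) = C(d, k+1) · 2^{d−k−1} · (3^{k+1} − 1), where C denotes the binomial coefficient. -/
open Pointwise RealInnerProductSpace

noncomputable section

abbrev E (d : ℕ) : Type := EuclideanSpace ℝ (Fin d)

def IsPolytope {d : ℕ} (P : Set (E d)) : Prop :=
  ∃ V : Finset (E d), V.Nonempty ∧ P = convexHull ℝ (V : Set (E d))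

def maximizers {d : ℕ} (P : Set (E d)) (c : E d) : Set (E d) :=
  {x ∈ P | ∀ y ∈ P, ⟪y, c⟫ ≤ ⟪x, c⟫}

def IsFace {d : ℕ} (P F : Set (E d)) : Prop :=
  F = ∅ ∨ F = P ∨ ∃ c : E d, c ≠ 0 ∧ F = maximizers P c

def IsNontrivialFace {d : ℕ} (P F : Set (E d)) : Prop :=
  IsFace P F ∧ F ≠ ∅ ∧ F ≠ P

def polarDual {d : ℕ} (P : Set (E d)) : Set (E d) :=
  {x | ∀ y ∈ P, ⟪x, y⟫ ≤ 1}

def dualFace {d : ℕ} (P F : Set (E d)) : Set (E d) :=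
  {x ∈ polarDual P | ∀ f ∈ F, ⟪x, f⟫ = 1}

def normalCone {d : ℕ} (P F : Set (E d)) : Set (E d) :=
  {c | maximizers P c = F}

def IsPerfectlyCentered {d : ℕ} (P : Set (E d)) : Prop :=
  ∀ F : Set (E d), IsFace P F → F.Nonempty →
    (intrinsicInterior ℝ F ∩ normalCone P F).Nonempty

def dimSet {d : ℕ} (F : Set (E d)) : ℕ :=
  Module.finrank ℝ (affineSpan ℝ F).direction

def fVec {d : ℕ} (P : Set (E d)) (k : ℕ) : ℕ :=
  {F : Set (E d) | IsFace P F ∧ F.Nonempty ∧ dimSet F = k}.ncard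

def stdCube (d : ℕ) : Set (E d) := {x | ∀ i, |x i| ≤ 1}

/-! For `c ≠ 0` the face of `□ + □*` maximizing `⟪·, c⟫` is the sum of the faces of the cube and
of the cross-polytope `□*` maximizing it. Coordinatewise it only sees whether `c i` vanishes, the
sign of `c i`, and whether `|c i|` is maximal; these five possibilities form a vector `φ` of kinds,
and the face is `{z | z i ∈ range (φ i), ∑_{|c i| max} ± z i = #{i : |c i| max} + 1}`. Its affine
hull is cut out by the constant coordinates and that one equation, so its dimension is
`#{i : c i = 0 or |c i| max} - 1`, and distinct kind vectors give distinct faces (compare a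
relative-interior point of one face with the coordinate ranges of the other). A `k`-face is thus a
choice of `k + 1` coordinates, a sign on each of the other `d - k - 1`, and on the chosen ones one
of `free, maxPos, maxNeg` with at least one `max`: `C(d, k+1) · 2^(d-k-1) · (3^(k+1) - 1)`. -/

lemma inner_eq_sum_mul {d : ℕ} (x y : E d) : ⟪x, y⟫ = ∑ i, x i * y i := by
  simp [PiLp.inner_apply, mul_comm]

lemma abs_sign_le_one (x : ℝ) : |(SignType.sign x : ℝ)| ≤ 1 := by
  rcases SignType.sign x with _ | _ | _ <;> simp

lemma maximizers_add {d : ℕ} (P Q : Set (E d)) (c : E d) :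
    maximizers (P + Q) c = maximizers P c + maximizers Q c := by
  ext z
  constructor
  · rintro ⟨hz, hmax⟩
    obtain ⟨p, hp, q, hq, rfl⟩ := hz
    refine ⟨p, ⟨hp, fun y hy => ?_⟩, q, ⟨hq, fun y hy => ?_⟩, rfl⟩
    · simpa [inner_add_left] using hmax (y + q) (Set.add_mem_add hy hq)
    · simpa [inner_add_left] using hmax (p + y) (Set.add_mem_add hp hy)
  · rintro ⟨p, ⟨hp, hpmax⟩, q, ⟨hq, hqmax⟩, rfl⟩
    refine ⟨Set.add_mem_add hp hq, ?_⟩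
    rintro _ ⟨p', hp', q', hq', rfl⟩
    simpa [inner_add_left] using add_le_add (hpmax p' hp') (hqmax q' hq')

lemma maximizers_eq_of_forall_le {d : ℕ} {S : Set (E d)} {c : E d} {m : ℝ}
    (hle : ∀ y ∈ S, ⟪y, c⟫ ≤ m) (hm : ∃ y ∈ S, ⟪y, c⟫ = m) :
    maximizers S c = {x ∈ S | ⟪x, c⟫ = m} := by
  obtain ⟨y₀, hy₀, hy₀m⟩ := hm
  ext x
  refine and_congr_right fun hx => ⟨fun hmax => ?_, fun hxm y hy => hxm ▸ hle y hy⟩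
  exact le_antisymm (hle x hx) (hy₀m ▸ hmax y₀ hy₀)

section Coordinates

variable {d : ℕ}

def coordBox (S : Fin d → Set ℝ) : Set (E d) := {x | ∀ i, x i ∈ S i}

lemma coordBox_add_inter_hyperplane {S T : Fin d → Set ℝ} {u : E d} {a b : ℝ}
    (hS : ∀ x ∈ coordBox S, ⟪x, u⟫ = a) :
    coordBox S + (coordBox T ∩ {y | ⟪y, u⟫ = b}) = coordBox (S + T) ∩ {z | ⟪z, u⟫ = a + b} := by
  ext z
  constructor
  · rintro ⟨x, hx, y, ⟨hy, hyu : ⟪y, u⟫ = b⟩, rfl⟩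
    refine ⟨fun i => Set.add_mem_add (hx i) (hy i), show ⟪x + y, u⟫ = a + b from ?_⟩
    rw [inner_add_left, hS x hx, hyu]
  · rintro ⟨hz, hzu : ⟪z, u⟫ = a + b⟩
    choose x hx y hy hxy using hz
    have hsum : WithLp.toLp 2 x + WithLp.toLp 2 y = z := by ext i; exact hxy i
    have hxS : WithLp.toLp 2 x ∈ coordBox S := hx
    refine ⟨_, hxS, _, ⟨hy, show _ = b from ?_⟩, hsum⟩
    rw [← hsum, inner_add_left, hS _ hxS] at hzu
    linarith

lemma maximizers_stdCube (c : E d) :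
    maximizers (stdCube d) c = {x | ∀ i, |x i| ≤ 1 ∧ x i * c i = |c i|} := by
  have hterm : ∀ x ∈ stdCube d, ∀ i, x i * c i ≤ |c i| := fun x hx i =>
    (le_abs_self _).trans (by rw [abs_mul]; exact mul_le_of_le_one_left (abs_nonneg _) (hx i))
  rw [maximizers_eq_of_forall_le (m := ∑ i, |c i|)]
  · ext x
    simp only [inner_eq_sum_mul]
    constructor
    · rintro ⟨hx, hsum⟩ i
      exact ⟨hx i, (Finset.sum_eq_sum_iff_of_le fun i _ => hterm x hx i).1 hsum i
        (Finset.mem_univ _)⟩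
    · intro h
      exact ⟨fun i => (h i).1, Finset.sum_congr rfl fun i _ => (h i).2⟩
  · intro y hy
    rw [inner_eq_sum_mul]
    exact Finset.sum_le_sum fun i _ => hterm y hy i
  · refine ⟨WithLp.toLp 2 fun i => (SignType.sign (c i) : ℝ), fun i => abs_sign_le_one _, ?_⟩
    rw [inner_eq_sum_mul]
    exact Finset.sum_congr rfl fun i _ => sign_mul_self (c i)

lemma polarDual_stdCube : polarDual (stdCube d) = {y : E d | ∑ i, |y i| ≤ 1} := by
  ext y
  constructor
  · intro hy
    have hsign : WithLp.toLp 2 (fun i => (SignType.sign (y i) : ℝ)) ∈ stdCube d :=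
      fun i => abs_sign_le_one _
    show ∑ i, |y i| ≤ 1
    simpa only [inner_eq_sum_mul, self_mul_sign] using hy _ hsign
  · intro hy x hx
    rw [inner_eq_sum_mul]
    calc ∑ i, y i * x i ≤ ∑ i, |y i| := Finset.sum_le_sum fun i _ => (le_abs_self _).trans
          (by rw [abs_mul]; exact mul_le_of_le_one_right (abs_nonneg _) (hx i))
      _ ≤ 1 := hy

lemma maximizers_crossPolytope (c : E d) {M : ℝ} (hM : 0 < M) (hle : ∀ i, |c i| ≤ M)
    (hattained : ∃ i, |c i| = M) :
    maximizers {y : E d | ∑ i, |y i| ≤ 1} c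
      = {y | ∑ i, |y i| = 1 ∧ ∀ i, y i * c i = |y i| * M} := by
  have hterm : ∀ (y : E d) i, y i * c i ≤ |y i| * M := fun y i =>
    (le_abs_self _).trans (by rw [abs_mul]; exact mul_le_mul_of_nonneg_left (hle i) (abs_nonneg _))
  have hsum : ∀ y : E d, ⟪y, c⟫ ≤ (∑ i, |y i|) * M := fun y => by
    rw [inner_eq_sum_mul, Finset.sum_mul]
    exact Finset.sum_le_sum fun i _ => hterm y i
  obtain ⟨i₀, hi₀⟩ := hattained
  rw [maximizers_eq_of_forall_le (m := M)]
  · ext y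
    constructor
    · rintro ⟨hy : ∑ i, |y i| ≤ 1, hyc⟩
      have hnorm : ∑ i, |y i| = 1 := by
        by_contra hne
        have := mul_lt_mul_of_pos_right (lt_of_le_of_ne hy hne) hM
        linarith [hsum y]
      refine ⟨hnorm, fun i => ?_⟩
      rw [inner_eq_sum_mul] at hyc
      have hyc' : ∑ i, y i * c i = ∑ i, |y i| * M := by rw [← Finset.sum_mul, hnorm, one_mul, hyc]
      exact (Finset.sum_eq_sum_iff_of_le fun i _ => hterm y i).1 hyc' i (Finset.mem_univ _)
    · rintro ⟨hnorm, hy⟩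
      refine ⟨show ∑ i, |y i| ≤ 1 from hnorm.le, ?_⟩
      rw [inner_eq_sum_mul, Finset.sum_congr rfl fun i _ => hy i, ← Finset.sum_mul, hnorm, one_mul]
  · exact fun y (hy : ∑ i, |y i| ≤ 1) =>
      (hsum y).trans (mul_le_of_le_one_left hM.le hy)
  · have hc₀ : c i₀ ≠ 0 := by rintro h; rw [h, abs_zero] at hi₀; exact hM.ne hi₀
    refine ⟨EuclideanSpace.single i₀ (SignType.sign (c i₀) : ℝ), ?_, ?_⟩
    · show ∑ i, |EuclideanSpace.single i₀ (SignType.sign (c i₀) : ℝ) i| ≤ 1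
      rw [Finset.sum_eq_single i₀ (fun j _ hj => by simp [hj]) (by simp)]
      rcases lt_trichotomy (c i₀) 0 with h | h | h
      · simp [sign_neg h]
      · exact absurd h hc₀
      · simp [sign_pos h]
    · rw [EuclideanSpace.inner_single_left]
      simp [sign_mul_self, hi₀]

end Coordinates

/-- How coordinate `i` behaves on the face of `□ + □*` maximizing `⟪·, c⟫`: `free` if `c i = 0`,
`pos`/`neg` if `c i` is nonzero but `|c i|` is not maximal, `maxPos`/`maxNeg` if `|c i|` is maximal;
the suffix is the sign of `c i`. -/
inductive Kind
  | free
  | pos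
  | neg
  | maxPos
  | maxNeg
  deriving DecidableEq

instance : Fintype Kind :=
  ⟨{.free, .pos, .neg, .maxPos, .maxNeg}, fun a => by cases a <;> decide⟩

namespace Kind

open Set Topology

def sign : Kind → ℝ
  | free => 0
  | pos | maxPos => 1
  | neg | maxNeg => -1

def extremalSign : Kind → ℝ
  | maxPos => 1
  | maxNeg => -1
  | _ => 0

def movable : Finset Kind := {free, maxPos, maxNeg}

def extremal : Finset Kind := {maxPos, maxNeg}

def cubeRange : Kind → Set ℝ
  | free => Icc (-1) 1
  | a => {a.sign}

def crossRange : Kind → Set ℝ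
  | maxPos => Ici 0
  | maxNeg => Iic 0
  | _ => {0}

def range : Kind → Set ℝ
  | free => Icc (-1) 1
  | pos => {1}
  | neg => {-1}
  | maxPos => Ici 1
  | maxNeg => Iic (-1)

lemma cubeRange_add_crossRange (a : Kind) : a.cubeRange + a.crossRange = a.range := by
  cases a <;> simp [cubeRange, crossRange, range, sign, Set.singleton_add]

lemma mem_crossRange_iff {a : Kind} {y : ℝ} : y ∈ a.crossRange ↔ y * a.extremalSign = |y| := by
  cases a <;> simp [crossRange, extremalSign, eq_comm (a := (0:ℝ))]
  · rw [eq_comm, abs_eq_self]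
  · rw [eq_comm, abs_eq_neg_self]

lemma mul_extremalSign_of_mem_cubeRange {a : Kind} {x : ℝ} (hx : x ∈ a.cubeRange) :
    x * a.extremalSign = if a ∈ extremal then 1 else 0 := by
  cases a <;> simp_all [cubeRange, sign, extremalSign, extremal]

lemma range_eq_singleton_of_notMem_movable {a : Kind} (ha : a ∉ movable) :
    a.range = {a.sign} := by
  cases a <;> simp_all [movable, range, sign]

def ofCoord (x : ℝ) (isMax : Prop) [Decidable isMax] : Kind :=
  if x = 0 then free
  else if isMax then (if 0 < x then maxPos else maxNeg)
  else if 0 < x then pos else neg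

lemma ofCoord_sign_add_extremalSign (a : Kind) {P : Prop} [Decidable P] (hP : P ↔ a ∈ extremal) :
    ofCoord (a.sign + a.extremalSign) P = a := by
  cases a <;> simp [ofCoord, sign, extremalSign, extremal, hP]

lemma extremalSign_eq_zero_of_notMem_movable {a : Kind} (ha : a ∉ movable) :
    a.extremalSign = 0 := by
  cases a <;> simp_all [movable, extremalSign]

lemma extremalSign_mul_self_of_mem_extremal {a : Kind} (ha : a ∈ extremal) :
    a.extremalSign * a.extremalSign = 1 := by
  cases a <;> simp_all [extremal, extremalSign]

lemma mem_movable_of_mem_extremal {a : Kind} (ha : a ∈ extremal) : a ∈ movable := by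
  cases a <;> simp_all [extremal, movable]

lemma abs_sign_add_extremalSign_le (a : Kind) : |a.sign + a.extremalSign| ≤ 2 := by
  cases a <;> norm_num [sign, extremalSign]

lemma abs_sign_add_extremalSign_eq_two_iff {a : Kind} :
    |a.sign + a.extremalSign| = 2 ↔ a ∈ extremal := by
  cases a <;> norm_num [sign, extremalSign] <;> simp [extremal]

lemma sign_add_mul_extremalSign_mul_extremalSign (a : Kind) (t : ℝ) :
    (a.sign + t * a.extremalSign) * a.extremalSign = if a ∈ extremal then 1 + t else 0 := by
  cases a <;> simp [sign, extremalSign, extremal]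
  ring

variable {t : ℝ}

lemma sign_add_mul_extremalSign_mem_range (a : Kind) (ht : 0 ≤ t) :
    a.sign + t * a.extremalSign ∈ a.range := by
  cases a <;> simp [range, sign, extremalSign, ht]

lemma range_mem_nhds {a : Kind} (ha : a ∈ movable) (ht : 0 < t) :
    a.range ∈ 𝓝 (a.sign + t * a.extremalSign) := by
  cases a <;> simp only [movable, range, sign, extremalSign] at ha ⊢
  all_goals first
    | exact absurd ha (by decide)
    | exact Icc_mem_nhds (by norm_num) (by norm_num)
    | exact Ici_mem_nhds (by linarith)
    | exact Iic_mem_nhds (by linarith)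

-- For `t > 0`, `a.sign + t * a.extremalSign ∈ b.range` holds exactly when `a.range ⊆ b.range`.
lemma eq_of_mem_range {a b : Kind} {s : ℝ} (ht : 0 < t) (hs : 0 < s)
    (hab : a.sign + t * a.extremalSign ∈ b.range) (hba : b.sign + s * b.extremalSign ∈ a.range) :
    a = b := by
  cases a <;> cases b <;> simp only [range, sign, extremalSign, mem_Icc, mem_Ici, mem_Iic,
    mem_singleton_iff] at hab hba ⊢ <;> first | rfl | (exfalso; linarith)

end Kind

section Faces

open Topology

variable {d : ℕ}

def kindOf (c : E d) (i : Fin d) : Kind :=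
  Kind.ofCoord (c i) (∀ j, |c j| ≤ |c i|)

lemma mem_cubeRange_kindOf {c : E d} {i : Fin d} {x : ℝ} :
    x ∈ (kindOf c i).cubeRange ↔ |x| ≤ 1 ∧ x * c i = |c i| := by
  have hsign : c i ≠ 0 → (|x| ≤ 1 ∧ x * c i = |c i| ↔ x = SignType.sign (c i)) := fun h =>
    ⟨fun hx => mul_right_cancel₀ h (hx.2.trans (sign_mul_self _).symm),
      fun hx => hx ▸ ⟨abs_sign_le_one _, sign_mul_self _⟩⟩
  unfold kindOf Kind.ofCoord
  split_ifs with h0 hmax hpos hpos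
  · simp [Kind.cubeRange, h0, abs_le]
  all_goals
    rw [hsign h0]
    first
    | simp [Kind.cubeRange, Kind.sign, sign_pos hpos]
    | simp [Kind.cubeRange, Kind.sign, sign_neg (lt_of_le_of_ne (not_lt.1 hpos) h0)]

lemma mem_crossRange_kindOf {c : E d} {M : ℝ} (hM : 0 < M) (hle : ∀ j, |c j| ≤ M)
    (hattained : ∃ j, |c j| = M) {i : Fin d} {y : ℝ} :
    y ∈ (kindOf c i).crossRange ↔ y * c i = |y| * M := by
  obtain ⟨j₀, hj₀⟩ := hattained
  rw [Kind.mem_crossRange_iff]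
  unfold kindOf Kind.ofCoord
  split_ifs with h0 hmax hpos hpos
  · simp [Kind.extremalSign, h0, hM.ne', eq_comm (a := (0 : ℝ))]
  · have hci : |c i| = M := le_antisymm (hle i) (hj₀ ▸ hmax j₀)
    rw [abs_of_pos hpos] at hci
    simp [Kind.extremalSign, hci, hM.ne']
  · have hci : |c i| = M := le_antisymm (hle i) (hj₀ ▸ hmax j₀)
    rw [abs_of_neg (lt_of_le_of_ne (not_lt.1 hpos) h0)] at hci
    rw [← neg_eq_iff_eq_neg.2 hci.symm]
    simp only [Kind.extremalSign, mul_neg, mul_one, ← neg_mul, mul_left_inj' hM.ne']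
  all_goals
    simp only [not_forall, not_le] at hmax
    obtain ⟨j, hj⟩ := hmax
    have hlt : |c i| < M := hj.trans_le (hle j)
    simp only [Kind.extremalSign, mul_zero, eq_comm (a := (0 : ℝ)), abs_eq_zero]
    refine ⟨fun hy => by simp [hy], fun h => by_contra fun hy => ?_⟩
    have : y * c i < |y| * M := (le_abs_self _).trans_lt
      (by rw [abs_mul]; exact mul_lt_mul_of_pos_left hlt (abs_pos.2 hy))
    exact this.ne h

lemma exists_forall_abs_le_abs {c : E d} (hc : c ≠ 0) : ∃ i, 0 < |c i| ∧ ∀ j, |c j| ≤ |c i| := by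
  obtain ⟨i₁, hi₁⟩ : ∃ i, c i ≠ 0 := by
    by_contra! h
    exact hc (PiLp.ext h)
  obtain ⟨i, -, hi⟩ := Finset.exists_max_image Finset.univ (fun j => |c j|) ⟨i₁, Finset.mem_univ _⟩
  exact ⟨i, (abs_pos.2 hi₁).trans_le (hi i₁ (Finset.mem_univ _)), fun j => hi j (Finset.mem_univ _)⟩

def extremalCoords (φ : Fin d → Kind) : Finset (Fin d) :=
  Finset.univ.filter fun i => φ i ∈ Kind.extremal

def movableCoords (φ : Fin d → Kind) : Finset (Fin d) :=
  Finset.univ.filter fun i => φ i ∈ Kind.movable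

def extremalVec (φ : Fin d → Kind) : E d := WithLp.toLp 2 fun i => (φ i).extremalSign

def roundingFace (φ : Fin d → Kind) : Set (E d) :=
  coordBox (fun i => (φ i).range) ∩ {z | ⟪z, extremalVec φ⟫ = (extremalCoords φ).card + 1}

lemma inner_extremalVec_of_mem_coordBox_cubeRange {φ : Fin d → Kind} {x : E d}
    (hx : x ∈ coordBox fun i => (φ i).cubeRange) :
    ⟪x, extremalVec φ⟫ = (extremalCoords φ).card := by
  rw [inner_eq_sum_mul]
  simp only [extremalVec, Kind.mul_extremalSign_of_mem_cubeRange (hx _)]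
  rw [Finset.sum_boole, extremalCoords]

lemma inner_extremalVec_of_mem_coordBox_crossRange {φ : Fin d → Kind} {y : E d}
    (hy : y ∈ coordBox fun i => (φ i).crossRange) :
    ⟪y, extremalVec φ⟫ = ∑ i, |y i| := by
  rw [inner_eq_sum_mul]
  exact Finset.sum_congr rfl fun i _ => Kind.mem_crossRange_iff.1 (hy i)

lemma maximizers_crossPolytope_eq {c : E d} (hc : c ≠ 0) :
    maximizers {y : E d | ∑ i, |y i| ≤ 1} c
      = coordBox (fun i => (kindOf c i).crossRange) ∩ {y | ⟪y, extremalVec (kindOf c)⟫ = 1} := by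
  obtain ⟨i₀, hpos, hmax⟩ := exists_forall_abs_le_abs hc
  rw [maximizers_crossPolytope c hpos hmax ⟨i₀, rfl⟩]
  have hiff : ∀ i (t : ℝ), t ∈ (kindOf c i).crossRange ↔ t * c i = |t| * |c i₀| :=
    fun i t => mem_crossRange_kindOf hpos hmax ⟨i₀, rfl⟩
  ext y
  constructor
  · rintro ⟨hnorm, hy⟩
    have hbox : y ∈ coordBox fun i => (kindOf c i).crossRange := fun i => (hiff i _).2 (hy i)
    exact ⟨hbox, (inner_extremalVec_of_mem_coordBox_crossRange hbox).trans hnorm⟩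
  · rintro ⟨hbox, hu : ⟪y, extremalVec (kindOf c)⟫ = 1⟩
    exact ⟨(inner_extremalVec_of_mem_coordBox_crossRange hbox).symm.trans hu,
      fun i => (hiff i _).1 (hbox i)⟩

lemma maximizers_eq_roundingFace {c : E d} (hc : c ≠ 0) :
    maximizers (stdCube d + polarDual (stdCube d)) c = roundingFace (kindOf c) := by
  have hcube : maximizers (stdCube d) c = coordBox fun i => (kindOf c i).cubeRange := by
    rw [maximizers_stdCube]
    ext x
    exact forall_congr' fun i => mem_cubeRange_kindOf.symm
  rw [maximizers_add, polarDual_stdCube, maximizers_crossPolytope_eq hc, hcube,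
    coordBox_add_inter_hyperplane fun x hx => inner_extremalVec_of_mem_coordBox_cubeRange hx]
  simp only [roundingFace, ← Kind.cubeRange_add_crossRange]
  rfl

def normalVec (φ : Fin d → Kind) : E d := WithLp.toLp 2 fun i => (φ i).sign + (φ i).extremalSign

lemma kindOf_normalVec {φ : Fin d → Kind} (h : (extremalCoords φ).Nonempty) :
    kindOf (normalVec φ) = φ := by
  obtain ⟨j₀, hj₀⟩ := h
  have h₂ : |normalVec φ j₀| = 2 :=
    Kind.abs_sign_add_extremalSign_eq_two_iff.2 (Finset.mem_filter.1 hj₀).2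
  funext i
  refine Kind.ofCoord_sign_add_extremalSign (φ i) ⟨fun hi => ?_, fun hi j => ?_⟩
  · exact Kind.abs_sign_add_extremalSign_eq_two_iff.1
      (le_antisymm (Kind.abs_sign_add_extremalSign_le _) (h₂ ▸ hi j₀))
  · exact (Kind.abs_sign_add_extremalSign_eq_two_iff.2 hi).symm ▸
      Kind.abs_sign_add_extremalSign_le (φ j)

lemma normalVec_ne_zero {φ : Fin d → Kind} (h : (extremalCoords φ).Nonempty) : normalVec φ ≠ 0 := by
  obtain ⟨j₀, hj₀⟩ := h
  intro h0
  have h₂ : |normalVec φ j₀| = 2 :=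
    Kind.abs_sign_add_extremalSign_eq_two_iff.2 (Finset.mem_filter.1 hj₀).2
  simp [h0] at h₂

def relintPoint (φ : Fin d → Kind) : E d :=
  WithLp.toLp 2 fun i => (φ i).sign + ((extremalCoords φ).card : ℝ)⁻¹ * (φ i).extremalSign

lemma relintPoint_mem_roundingFace {φ : Fin d → Kind} (h : (extremalCoords φ).Nonempty) :
    relintPoint φ ∈ roundingFace φ := by
  refine ⟨fun i => Kind.sign_add_mul_extremalSign_mem_range _ (by positivity), ?_⟩
  show ⟪relintPoint φ, extremalVec φ⟫ = _
  have hcard : ((extremalCoords φ).card : ℝ) ≠ 0 := Nat.cast_ne_zero.2 h.card_pos.ne'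
  rw [inner_eq_sum_mul]
  simp only [relintPoint, extremalVec, Kind.sign_add_mul_extremalSign_mul_extremalSign]
  rw [Finset.sum_ite, Finset.sum_const_zero, add_zero, Finset.sum_const, nsmul_eq_mul]
  field_simp
  rfl

lemma roundingFace_injOn : Set.InjOn (roundingFace (d := d)) {φ | (extremalCoords φ).Nonempty} := by
  intro φ hφ ψ hψ h
  have hφψ := h ▸ relintPoint_mem_roundingFace hφ
  have hψφ := h.symm ▸ relintPoint_mem_roundingFace hψ
  funext i
  exact Kind.eq_of_mem_range (by have := hφ.card_pos; positivity)
    (by have := hψ.card_pos; positivity) (hφψ.1 i) (hψφ.1 i)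

def faceConstraints (φ : Fin d → Kind) : E d →ₗ[ℝ] ({i // φ i ∉ Kind.movable} → ℝ) × ℝ :=
  (LinearMap.pi fun i : {i // φ i ∉ Kind.movable} =>
    (EuclideanSpace.proj i.1 : E d →L[ℝ] ℝ).toLinearMap).prod (innerₗ (E d) (extremalVec φ))

lemma faceConstraints_apply (φ : Fin d → Kind) (v : E d) :
    faceConstraints φ v = (fun i : {i // φ i ∉ Kind.movable} => v i, ⟪extremalVec φ, v⟫) := rfl

lemma vectorSpan_roundingFace_le_ker (φ : Fin d → Kind) :
    vectorSpan ℝ (roundingFace φ) ≤ LinearMap.ker (faceConstraints φ) := by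
  rw [vectorSpan_def, Submodule.span_le]
  rintro _ ⟨x, ⟨hx, hxu : ⟪x, _⟫ = _⟩, y, ⟨hy, hyu : ⟪y, _⟫ = _⟩, rfl⟩
  rw [SetLike.mem_coe, LinearMap.mem_ker, faceConstraints_apply, Prod.mk_eq_zero]
  dsimp only
  refine ⟨funext fun i => ?_, ?_⟩
  · have hxi : x i ∈ (φ i).range := hx i
    have hyi : y i ∈ (φ i).range := hy i
    rw [Kind.range_eq_singleton_of_notMem_movable i.2] at hxi hyi
    simp [Set.mem_singleton_iff.1 hxi, Set.mem_singleton_iff.1 hyi]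
  · rw [vsub_eq_sub, inner_sub_right, real_inner_comm, hxu, real_inner_comm, hyu, sub_self]

lemma eventually_relintPoint_add_smul_mem_roundingFace {φ : Fin d → Kind}
    (h : (extremalCoords φ).Nonempty) {v : E d} (hv : v ∈ LinearMap.ker (faceConstraints φ)) :
    ∀ᶠ ε in 𝓝 (0 : ℝ), relintPoint φ + ε • v ∈ roundingFace φ := by
  rw [LinearMap.mem_ker, faceConstraints_apply, Prod.mk_eq_zero, funext_iff] at hv
  set p := relintPoint φ
  have hp := relintPoint_mem_roundingFace h
  have ht : (0 : ℝ) < ((extremalCoords φ).card : ℝ)⁻¹ := by have := h.card_pos; positivity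
  have hcoord : ∀ i, ∀ᶠ ε in 𝓝 (0 : ℝ), p i + ε * v i ∈ (φ i).range := fun i => by
    by_cases hi : φ i ∈ Kind.movable
    · have hcont : Filter.Tendsto (fun ε : ℝ => p i + ε * v i) (𝓝 0) (𝓝 (p i)) := by
        simpa using (show Continuous fun ε : ℝ => p i + ε * v i by fun_prop).tendsto 0
      exact hcont.eventually_mem (Kind.range_mem_nhds hi ht)
    · exact Filter.Eventually.of_forall fun ε => by simpa [hv.1 ⟨i, hi⟩] using hp.1 i
  filter_upwards [Filter.eventually_all.2 hcoord] with ε hε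
  refine ⟨fun i => by simpa using hε i, ?_⟩
  show ⟪p + ε • v, extremalVec φ⟫ = _
  rw [inner_add_left, real_inner_smul_left, real_inner_comm (extremalVec φ) v, hv.2, mul_zero,
    add_zero]
  exact hp.2

lemma direction_affineSpan_roundingFace {φ : Fin d → Kind} (h : (extremalCoords φ).Nonempty) :
    (affineSpan ℝ (roundingFace φ)).direction = LinearMap.ker (faceConstraints φ) := by
  rw [direction_affineSpan]
  refine le_antisymm (vectorSpan_roundingFace_le_ker φ) fun v hv => ?_
  obtain ⟨ε, hε, hε0⟩ := (((eventually_relintPoint_add_smul_mem_roundingFace h hv).filter_mono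
    nhdsWithin_le_nhds).and self_mem_nhdsWithin).exists (f := 𝓝[≠] (0 : ℝ))
  have hv : v = ε⁻¹ • ((relintPoint φ + ε • v) -ᵥ relintPoint φ) := by
    rw [vsub_eq_sub, add_sub_cancel_left, smul_smul, inv_mul_cancel₀ hε0, one_smul]
  rw [hv]
  exact Submodule.smul_mem _ _ (vsub_mem_vectorSpan ℝ hε (relintPoint_mem_roundingFace h))

lemma faceConstraints_surjective {φ : Fin d → Kind} (h : (extremalCoords φ).Nonempty) :
    Function.Surjective (faceConstraints φ) := by
  obtain ⟨i₀, hi₀⟩ := h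
  have hi₀ : φ i₀ ∈ Kind.extremal := (Finset.mem_filter.1 hi₀).2
  rintro ⟨w, t⟩
  refine ⟨WithLp.toLp 2 fun j => if hj : φ j ∈ Kind.movable then
    (if j = i₀ then t * (φ i₀).extremalSign else 0) else w ⟨j, hj⟩, ?_⟩
  rw [faceConstraints_apply, inner_eq_sum_mul, Finset.sum_eq_single i₀]
  · ext i
    · simp [i.2]
    · simp [Kind.mem_movable_of_mem_extremal hi₀, extremalVec, mul_left_comm,
        Kind.extremalSign_mul_self_of_mem_extremal hi₀]
  · intro j _ hj
    by_cases hjm : φ j ∈ Kind.movable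
    · simp [hjm, hj]
    · simp [extremalVec, Kind.extremalSign_eq_zero_of_notMem_movable hjm]
  · simp

lemma dimSet_roundingFace_add_one {φ : Fin d → Kind} (h : (extremalCoords φ).Nonempty) :
    dimSet (roundingFace φ) + 1 = (movableCoords φ).card := by
  have hrank := (faceConstraints φ).finrank_range_add_finrank_ker
  rw [LinearMap.range_eq_top.2 (faceConstraints_surjective h), finrank_top, Module.finrank_prod,
    Module.finrank_fintype_fun_eq_card, Module.finrank_self, finrank_euclideanSpace_fin,
    Fintype.card_subtype] at hrank
  have hsplit := Finset.card_filter_add_card_filter_not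
    (s := Finset.univ) (fun i : Fin d => φ i ∈ Kind.movable)
  rw [dimSet, direction_affineSpan_roundingFace h]
  simp only [movableCoords, Finset.card_univ, Fintype.card_fin] at hsplit ⊢
  omega

lemma kindOf_mem_extremal {c : E d} {i : Fin d} (hi : 0 < |c i|) (hmax : ∀ j, |c j| ≤ |c i|) :
    kindOf c i ∈ Kind.extremal := by
  have hi : c i ≠ 0 := abs_pos.1 hi
  unfold kindOf Kind.ofCoord
  split_ifs <;> simp_all [Kind.extremal]

lemma dimSet_nesterov : dimSet (stdCube d + polarDual (stdCube d)) = d := by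
  have hball : Metric.ball (0 : E d) 1 ⊆ stdCube d + polarDual (stdCube d) := fun x hx =>
    ⟨x, fun i => ((PiLp.norm_apply_le x i).trans (mem_ball_zero_iff.1 hx).le),
      0, fun y _ => by simp, add_zero x⟩
  have hint : (interior (convexHull ℝ (stdCube d + polarDual (stdCube d)))).Nonempty :=
    ⟨0, mem_interior.2 ⟨_, hball.trans (subset_convexHull ℝ _), Metric.isOpen_ball,
      Metric.mem_ball_self one_pos⟩⟩
  rw [dimSet, affineSpan_eq_top_of_nonempty_interior hint, AffineSubspace.direction_top,
    finrank_top, finrank_euclideanSpace_fin]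

lemma setOf_faces_eq_image {k : ℕ} (hk : k < d) :
    {F | IsFace (stdCube d + polarDual (stdCube d)) F ∧ F.Nonempty ∧ dimSet F = k}
      = roundingFace '' {φ | (extremalCoords φ).Nonempty ∧ (movableCoords φ).card = k + 1} := by
  ext F
  constructor
  · rintro ⟨hempty | rfl | ⟨c, hc, rfl⟩, hne, hdim⟩
    · exact absurd hempty hne.ne_empty
    · rw [dimSet_nesterov] at hdim
      omega
    · obtain ⟨i, hpos, hmax⟩ := exists_forall_abs_le_abs hc
      have hA : (extremalCoords (kindOf c)).Nonempty :=
        ⟨i, Finset.mem_filter.2 ⟨Finset.mem_univ _, kindOf_mem_extremal hpos hmax⟩⟩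
      rw [maximizers_eq_roundingFace hc] at hdim ⊢
      exact ⟨kindOf c, ⟨hA, hdim ▸ (dimSet_roundingFace_add_one hA).symm⟩, rfl⟩
  · rintro ⟨φ, ⟨hA, hcard⟩, rfl⟩
    refine ⟨Or.inr (Or.inr ⟨normalVec φ, normalVec_ne_zero hA, ?_⟩),
      ⟨_, relintPoint_mem_roundingFace hA⟩,
      by have := dimSet_roundingFace_add_one hA; omega⟩
    rw [maximizers_eq_roundingFace (normalVec_ne_zero hA), kindOf_normalVec hA]

end Faces

section Counting

variable {ι α : Type*} [Fintype ι] [DecidableEq ι]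

lemma card_piFinset_ite (S₁ S₂ : Finset α) (B : Finset ι) :
    (Fintype.piFinset fun i => if i ∈ B then S₁ else S₂).card
      = S₁.card ^ B.card * S₂.card ^ (Fintype.card ι - B.card) := by
  rw [Fintype.card_piFinset]
  simp only [apply_ite Finset.card]
  rw [Finset.prod_ite, Finset.prod_const, Finset.prod_const, Finset.filter_mem_eq_inter,
    Finset.univ_inter, Finset.filter_not, Finset.filter_mem_eq_inter, Finset.univ_inter,
    ← Finset.compl_eq_univ_sdiff, Finset.card_compl]

variable [DecidableEq α]

lemma filter_piFinset_filter_mem_eq (S T : Finset α) (B : Finset ι) :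
    ((Fintype.piFinset fun _ : ι => S).filter fun f => Finset.univ.filter (fun i => f i ∈ T) = B)
      = Fintype.piFinset fun i => if i ∈ B then S ∩ T else S \ T := by
  ext f
  simp only [Finset.mem_filter, Fintype.mem_piFinset]
  constructor
  · rintro ⟨hS, rfl⟩ i
    by_cases hi : f i ∈ T <;> simp [hi, hS i]
  · intro hf
    have hS : ∀ i, f i ∈ S ∧ (f i ∈ T ↔ i ∈ B) := fun i => by
      have := hf i
      split_ifs at this <;> simp_all [Finset.mem_inter, Finset.mem_sdiff]
    exact ⟨fun i => (hS i).1, by ext i; simp [(hS i).2]⟩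

lemma card_filter_card_filter_mem_eq (S T : Finset α) (m : ℕ) :
    ((Fintype.piFinset fun _ : ι => S).filter fun f =>
        (Finset.univ.filter fun i => f i ∈ T).card = m).card
      = (Fintype.card ι).choose m * (S ∩ T).card ^ m * (S \ T).card ^ (Fintype.card ι - m) := by
  have hmaps : ∀ f ∈ (Fintype.piFinset fun _ : ι => S).filter fun f =>
      (Finset.univ.filter fun i => f i ∈ T).card = m,
      Finset.univ.filter (fun i => f i ∈ T) ∈ Finset.powersetCard m Finset.univ :=
    fun f hf => Finset.mem_powersetCard_univ.2 (Finset.mem_filter.1 hf).2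
  have hfiber : ∀ B ∈ Finset.powersetCard m (Finset.univ : Finset ι),
      (((Fintype.piFinset fun _ : ι => S).filter fun f =>
        (Finset.univ.filter fun i => f i ∈ T).card = m).filter fun f =>
          Finset.univ.filter (fun i => f i ∈ T) = B).card
        = (S ∩ T).card ^ m * (S \ T).card ^ (Fintype.card ι - m) := by
    intro B hB
    rw [Finset.mem_powersetCard_univ] at hB
    rw [Finset.filter_filter,
      Finset.filter_congr fun f _ => and_iff_right_of_imp fun h => by rw [h, hB],
      filter_piFinset_filter_mem_eq, card_piFinset_ite, hB]
  rw [Finset.card_eq_sum_card_fiberwise hmaps, Finset.sum_congr rfl hfiber, Finset.sum_const,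
    Finset.card_powersetCard, Finset.card_univ, smul_eq_mul, mul_assoc]

end Counting

lemma card_filter_extremalCoords_nonempty_movableCoords_card {d : ℕ} (m : ℕ) :
    (Finset.univ.filter fun φ : Fin d → Kind =>
        (extremalCoords φ).Nonempty ∧ (movableCoords φ).card = m).card
      = d.choose m * 2 ^ (d - m) * (3 ^ m - 1) := by
  have hall : (Finset.univ.filter fun φ : Fin d → Kind => (movableCoords φ).card = m).card
      = d.choose m * 2 ^ (d - m) * 3 ^ m := by
    have := card_filter_card_filter_mem_eq (ι := Fin d) Finset.univ Kind.movable m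
    rw [Fintype.piFinset_univ, Fintype.card_fin,
      show (Finset.univ ∩ Kind.movable).card = 3 from rfl,
      show (Finset.univ \ Kind.movable).card = 2 from rfl, mul_right_comm] at this
    exact this
  have hnone : (Finset.univ.filter fun φ : Fin d → Kind =>
      (movableCoords φ).card = m ∧ ¬ (extremalCoords φ).Nonempty).card
        = d.choose m * 2 ^ (d - m) := by
    have := card_filter_card_filter_mem_eq (ι := Fin d) Kind.extremalᶜ Kind.movable m
    rw [Fintype.card_fin, show (Kind.extremalᶜ ∩ Kind.movable).card = 1 from rfl,
      show (Kind.extremalᶜ \ Kind.movable).card = 2 from rfl, one_pow, mul_one] at this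
    rw [← this]
    congr 1
    ext φ
    simp only [Finset.mem_filter, Finset.mem_univ, true_and, Fintype.mem_piFinset,
      Finset.mem_compl, extremalCoords, movableCoords, Finset.filter_nonempty_iff, not_exists]
    tauto
  have hsplit := Finset.card_filter_add_card_filter_not
    (s := Finset.univ.filter fun φ : Fin d → Kind => (movableCoords φ).card = m)
    fun φ => (extremalCoords φ).Nonempty
  rw [Finset.filter_filter, Finset.filter_filter, hall, hnone] at hsplit
  rw [Finset.filter_congr fun φ _ => and_comm, Nat.mul_sub_one]
  omega

theorem fVec_nesterov_rounding_cube {d : ℕ} (k : ℕ) (hk : k + 1 ≤ d) :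
    fVec (stdCube d + polarDual (stdCube d)) k
      = Nat.choose d (k + 1) * 2 ^ (d - k - 1) * (3 ^ (k + 1) - 1) := by
  rw [fVec, setOf_faces_eq_image hk, (roundingFace_injOn.mono fun _ hφ => hφ.1).ncard_image,
    Set.ncard_eq_toFinset_card', Set.toFinset_ofPred,
    card_filter_extremalCoords_nonempty_movableCoords_card, Nat.sub_sub]
end
end

section
/- For every dimension d ≥ 3 and every choice of integers m_1,…,m_{d−1} ≥ 1, there exist polytopes P_1,…,P_{d−1} in ℝ^d with f_0(P_i) = m_i for each i, such that f_0(P_1 + ⋯ + P_{d−1}) = ∏_{i=1}^{d−1} m_i; that is, the trivial upper bound for the number of vertices of a Minkowski sum of d−1 polytopes in ℝ^d is attained. -/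
open Pointwise RealInnerProductSpace

noncomputable section

lemma dimSet_singleton {d : ℕ} (x : E d) : dimSet ({x} : Set (E d)) = 0 := by
  unfold dimSet
  rw [direction_affineSpan, vectorSpan_singleton]
  exact finrank_bot ℝ _
lemma singleton_of_dim_zero {d : ℕ} {F : Set (E d)} (h1 : F.Nonempty) (h2 : dimSet F = 0) :
    ∃ x, F = {x} := by
  obtain ⟨x, hx⟩ := h1
  refine ⟨x, Set.eq_singleton_iff_unique_mem.mpr ⟨hx, fun y hy => ?_⟩⟩
  unfold dimSet at h2
  rw [direction_affineSpan] at h2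
  have hbot : vectorSpan ℝ F = ⊥ := Submodule.finrank_eq_zero.mp h2
  have hv := vsub_mem_vectorSpan ℝ hy hx
  rw [hbot, Submodule.mem_bot] at hv
  exact vsub_eq_zero_iff_eq.mp hv
lemma max_singleton {d : ℕ} (V : Finset (E d)) (c w : E d) (hw : w ∈ V)
    (h : ∀ u ∈ V, u ≠ w → ⟪u, c⟫ < ⟪w, c⟫) :
    maximizers (convexHull ℝ (V : Set (E d))) c = {w} := by
  have hlin : IsLinearMap ℝ (fun y : E d => ⟪y, c⟫) :=
    ⟨fun a b => inner_add_left a b c, fun r a => real_inner_smul_left a c r⟩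
  have hcv : Convex ℝ {y : E d | ⟪y, c⟫ ≤ ⟪w, c⟫} := convex_halfSpace_le (𝕜 := ℝ) (f := fun y : E d => (⟪y, c⟫ : ℝ)) hlin (⟪w, c⟫ : ℝ)
  have hsub : convexHull ℝ (V : Set (E d)) ⊆ {y | ⟪y, c⟫ ≤ ⟪w, c⟫} :=
    convexHull_min (fun u hu => by
      rcases eq_or_ne u w with rfl | hne
      · exact Set.mem_setOf.mpr le_rfl
      · exact Set.mem_setOf.mpr (le_of_lt (h u hu hne))) hcv
  apply Set.eq_singleton_iff_unique_mem.mpr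
  refine ⟨⟨subset_convexHull ℝ _ hw, fun y hy => hsub hy⟩, ?_⟩
  rintro x ⟨hxP, hmax⟩
  have hxw : ⟪x, c⟫ = ⟪w, c⟫ := le_antisymm (hsub hxP) (hmax w (subset_convexHull ℝ _ hw))
  rw [Finset.convexHull_eq] at hxP
  obtain ⟨wt, hwt0, hwt1, hx⟩ := hxP
  rw [Finset.centerMass_eq_of_sum_1 _ _ hwt1] at hx
  simp only [id] at hx
  have hinner : ∑ y ∈ V, wt y * ⟪y, c⟫ = ⟪w, c⟫ := by
    rw [← hxw, ← hx, sum_inner]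
    exact Finset.sum_congr rfl fun y _ => (real_inner_smul_left _ _ _).symm
  have hzero : ∑ y ∈ V, wt y * (⟪w, c⟫ - ⟪y, c⟫) = 0 := by
    simp only [mul_sub]
    rw [Finset.sum_sub_distrib, hinner, ← Finset.sum_mul, hwt1, one_mul, sub_self]
  have hterm : ∀ y ∈ V, wt y * (⟪w, c⟫ - ⟪y, c⟫) = 0 := by
    refine (Finset.sum_eq_zero_iff_of_nonneg ?_).mp hzero
    intro y hy
    rcases eq_or_ne y w with rfl | hne
    · simp
    · exact mul_nonneg (hwt0 y hy) (by linarith [h y hy hne])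
  have hwty : ∀ y ∈ V, y ≠ w → wt y = 0 := by
    intro y hy hne
    rcases mul_eq_zero.mp (hterm y hy) with h0 | h0
    · exact h0
    · exact absurd h0 (by have := h y hy hne; intro hh; linarith)
  have hww : wt w = 1 := by
    rw [← hwt1, eq_comm, Finset.sum_eq_single w (fun y hy hne => hwty y hy hne) (fun hnw => absurd hw hnw)]
  rw [← hx, Finset.sum_eq_single w (fun y hy hne => by rw [hwty y hy hne, zero_smul])
    (fun hnw => absurd hw hnw), hww, one_smul]
lemma extreme_of_max {d : ℕ} {P : Set (E d)} {c x : E d}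
    (h : maximizers P c = {x}) : x ∈ P.extremePoints ℝ := by
  have hx : x ∈ maximizers P c := h ▸ rfl
  obtain ⟨hxP, hmax⟩ := hx
  refine mem_extremePoints.mpr ⟨hxP, fun a ha b hb hseg => ?_⟩
  obtain ⟨s, t, hs, ht, hst, hco⟩ := hseg
  have hac : ⟪a, c⟫ ≤ ⟪x, c⟫ := hmax a ha
  have hbc : ⟪b, c⟫ ≤ ⟪x, c⟫ := hmax b hb
  have hxc : ⟪x, c⟫ = s * ⟪a, c⟫ + t * ⟪b, c⟫ := by
    rw [← hco, inner_add_left, real_inner_smul_left, real_inner_smul_left]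
  have h1 : s * ⟪a, c⟫ ≤ s * ⟪x, c⟫ := mul_le_mul_of_nonneg_left hac hs.le
  have h2 : t * ⟪b, c⟫ ≤ t * ⟪x, c⟫ := mul_le_mul_of_nonneg_left hbc ht.le
  have h3 : s * ⟪x, c⟫ + t * ⟪x, c⟫ = ⟪x, c⟫ := by rw [← add_mul, hst, one_mul]
  have hae : ⟪a, c⟫ = ⟪x, c⟫ := by
    by_contra hne
    have hlt : s * ⟪a, c⟫ < s * ⟪x, c⟫ := mul_lt_mul_of_pos_left (lt_of_le_of_ne hac hne) hs
    linarith
  have hbe : ⟪b, c⟫ = ⟪x, c⟫ := by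
    by_contra hne
    have hlt : t * ⟪b, c⟫ < t * ⟪x, c⟫ := mul_lt_mul_of_pos_left (lt_of_le_of_ne hbc hne) ht
    linarith
  have haM : a ∈ maximizers P c := ⟨ha, fun y hy => hae ▸ hmax y hy⟩
  have hbM : b ∈ maximizers P c := ⟨hb, fun y hy => hbe ▸ hmax y hy⟩
  rw [h] at haM hbM
  exact ⟨haM, hbM⟩
lemma fVec_zero_eq_card {d : ℕ} (V : Finset (E d)) (hV : V.Nonempty)
    (hexp : ∀ v ∈ V, ∃ c : E d, c ≠ 0 ∧ maximizers (convexHull ℝ (V : Set (E d))) c = {v}) :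
    fVec (convexHull ℝ (V : Set (E d))) 0 = V.card := by
  have hset : {F : Set (E d) | IsFace (convexHull ℝ (V : Set (E d))) F ∧ F.Nonempty ∧ dimSet F = 0}
      = (fun v => ({v} : Set (E d))) '' (V : Set (E d)) := by
    ext F
    constructor
    · rintro ⟨hface, hne, hdim⟩
      obtain ⟨x, rfl⟩ := singleton_of_dim_zero hne hdim
      refine ⟨x, ?_, rfl⟩
      rcases hface with h | h | ⟨c, hc, h⟩
      · exact absurd h (Set.singleton_ne_empty x)
      · obtain ⟨v, hv⟩ := hV
        have hvP : v ∈ convexHull ℝ (V : Set (E d)) := subset_convexHull ℝ _ hv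
        rw [← h] at hvP
        rw [Set.mem_singleton_iff.mp hvP] at hv
        exact hv
      · exact extremePoints_convexHull_subset (extreme_of_max h.symm)
    · rintro ⟨v, hv, rfl⟩
      obtain ⟨c, hc, hmax⟩ := hexp v hv
      exact ⟨Or.inr (Or.inr ⟨c, hc, hmax.symm⟩), ⟨v, rfl⟩, dimSet_singleton v⟩
  rw [fVec, hset, Set.ncard_image_of_injective _ Set.singleton_injective, Set.ncard_coe_finset]
def vtx (e : ℕ) (i : Fin (e + 2)) (j : ℕ) : E (e + 3) :=
  EuclideanSpace.single i.castSucc (j : ℝ) +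
    EuclideanSpace.single (Fin.last (e + 2)) (-(j : ℝ) ^ 2)
def cvec (e : ℕ) (g : Fin (e + 2) → ℝ) : E (e + 3) :=
  (∑ k, EuclideanSpace.single (Fin.castSucc k) (g k)) +
    EuclideanSpace.single (Fin.last (e + 2)) 1
lemma castSucc_ne_last (e : ℕ) (k : Fin (e + 2)) :
    (Fin.castSucc k) ≠ Fin.last (e + 2) := (Fin.castSucc_lt_last k).ne
lemma inner_vtx_cvec (e : ℕ) (i : Fin (e + 2)) (j : ℕ) (g : Fin (e + 2) → ℝ) :
    ⟪vtx e i j, cvec e g⟫ = (j : ℝ) * g i - (j : ℝ) ^ 2 := by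
  have h1 : ∀ x : Fin (e + 2), Fin.last (e + 2) ≠ x.castSucc :=
    fun x h => castSucc_ne_last e x h.symm
  have h2 : Fin.castSucc i ≠ Fin.last (e + 2) := castSucc_ne_last e i
  unfold vtx cvec
  simp [inner_add_left, inner_add_right, inner_sum, EuclideanSpace.inner_single_left,
    EuclideanSpace.single_apply, Fin.castSucc_inj, h1, h2, castSucc_ne_last e, mul_ite, Finset.sum_ite_eq, Finset.sum_ite_eq']
  ring
lemma inner_last_cvec (e : ℕ) (g : Fin (e + 2) → ℝ) :
    ⟪EuclideanSpace.single (Fin.last (e + 2)) (1 : ℝ), cvec e g⟫ = 1 := by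
  have h1 : ∀ x : Fin (e + 2), Fin.last (e + 2) ≠ x.castSucc :=
    fun x h => castSucc_ne_last e x h.symm
  unfold cvec
  simp [inner_add_right, inner_sum, EuclideanSpace.inner_single_left,
    EuclideanSpace.single_apply, h1, castSucc_ne_last e]
lemma cvec_ne_zero (e : ℕ) (g : Fin (e + 2) → ℝ) : cvec e g ≠ 0 := by
  intro h
  have h1 := inner_last_cvec e g
  rw [h, inner_zero_right] at h1
  exact zero_ne_one h1
lemma inner_vtx_single (e : ℕ) (i : Fin (e + 2)) (j : ℕ) (k : Fin (e + 2)) :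
    ⟪vtx e i j, EuclideanSpace.single (Fin.castSucc k) (1 : ℝ)⟫
      = if i = k then (j : ℝ) else 0 := by
  unfold vtx
  simp [inner_add_left, EuclideanSpace.inner_single_left, EuclideanSpace.single_apply,
    Fin.castSucc_inj, castSucc_ne_last, eq_comm]
lemma inner_sumvtx_single (e : ℕ) (f : Fin (e + 2) → ℕ) (k : Fin (e + 2)) :
    ⟪∑ i, vtx e i (f i), EuclideanSpace.single (Fin.castSucc k) (1 : ℝ)⟫ = (f k : ℝ) := by
  rw [sum_inner]
  simp only [inner_vtx_single]
  simp [Finset.sum_ite_eq']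
theorem trivial_vertex_bound_attained (d : ℕ) (hd : 3 ≤ d)
    (m : Fin (d - 1) → ℕ) (hm : ∀ i, 1 ≤ m i) :
    ∃ P : Fin (d - 1) → Set (E d),
      (∀ i, IsPolytope (P i)) ∧ (∀ i, fVec (P i) 0 = m i) ∧
      fVec (∑ i, P i) 0 = ∏ i, m i := by
  classical
  obtain ⟨e, rfl⟩ : ∃ e, d = e + 3 := ⟨d - 3, by omega⟩
  have hinj : ∀ i : Fin (e + 3 - 1), Function.Injective (vtx e i) := by
    intro i j j' hjj
    have h := congrArg (fun x => ⟪x, EuclideanSpace.single (Fin.castSucc i) (1 : ℝ)⟫) hjj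
    simp only [inner_vtx_single, if_pos rfl] at h
    exact_mod_cast h
  refine ⟨fun i => convexHull ℝ (((Finset.range (m i)).image (vtx e i) : Finset (E (e + 3))) :
      Set (E (e + 3))),
    fun i => ⟨(Finset.range (m i)).image (vtx e i),
      Finset.Nonempty.image ⟨0, Finset.mem_range.mpr (hm i)⟩ _, rfl⟩,
    fun i => ?_, ?_⟩
  · -- single polytope vertex count
    rw [fVec_zero_eq_card]
    · rw [Finset.card_image_of_injective _ (hinj i), Finset.card_range]
    · exact Finset.Nonempty.image ⟨0, Finset.mem_range.mpr (hm i)⟩ _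
    · intro v hv
      obtain ⟨j, hj, rfl⟩ := Finset.mem_image.mp hv
      refine ⟨cvec e (fun _ => 2 * (j : ℝ)), cvec_ne_zero e _, max_singleton _ _ _ hv ?_⟩
      intro u hu hne
      obtain ⟨j', hj', rfl⟩ := Finset.mem_image.mp hu
      have hjj : j' ≠ j := fun h => hne (by rw [h])
      have hjr : (j' : ℝ) ≠ (j : ℝ) := Nat.cast_injective.ne hjj
      rw [inner_vtx_cvec, inner_vtx_cvec]
      have h0 : 0 < ((j : ℝ) - (j' : ℝ)) ^ 2 :=
        lt_of_le_of_ne (sq_nonneg _) (Ne.symm (pow_ne_zero 2 (sub_ne_zero.mpr (Ne.symm hjr))))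
      nlinarith [h0]
  · -- the Minkowski sum
    have hWinj : Function.Injective
        (fun σ : (∀ i : Fin (e + 3 - 1), Fin (m i)) => ∑ i, vtx e i (σ i)) := by
      intro σ τ h
      funext k
      have h2 := congrArg (fun x => ⟪x, EuclideanSpace.single (Fin.castSucc k) (1 : ℝ)⟫) h
      simp only [inner_sumvtx_single] at h2
      have h3 : (σ k : ℕ) = (τ k : ℕ) := Nat.cast_injective h2
      exact Fin.val_injective h3
    have hsum : (∑ i : Fin (e + 3 - 1), convexHull ℝ
          (((Finset.range (m i)).image (vtx e i) : Finset (E (e + 3))) : Set (E (e + 3))))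
        = convexHull ℝ ((Finset.image
            (fun σ : (∀ i : Fin (e + 3 - 1), Fin (m i)) => ∑ i, vtx e i (σ i))
            Finset.univ : Finset (E (e + 3))) : Set (E (e + 3))) := by
      rw [← convexHull_sum]
      congr 1
      ext x
      rw [Set.mem_fintype_sum]
      constructor
      · rintro ⟨g, hg, rfl⟩
        have hch : ∀ i, ∃ j : Fin (m i), g i = vtx e i j := by
          intro i
          obtain ⟨j, hj, hji⟩ := Finset.mem_image.mp (hg i)
          exact ⟨⟨j, Finset.mem_range.mp hj⟩, hji.symm⟩
        choose σ hσ using hch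
        refine Finset.mem_coe.mpr (Finset.mem_image.mpr ⟨σ, Finset.mem_univ _, ?_⟩)
        exact (Finset.sum_congr rfl (fun i _ => (hσ i).symm))
      · intro hx
        obtain ⟨σ, _, rfl⟩ := Finset.mem_image.mp (Finset.mem_coe.mp hx)
        exact ⟨fun i => vtx e i (σ i),
          fun i => Finset.mem_image.mpr ⟨(σ i : ℕ), Finset.mem_range.mpr (σ i).isLt, rfl⟩, rfl⟩
    rw [hsum, fVec_zero_eq_card]
    · rw [Finset.card_image_of_injective _ hWinj, Finset.card_univ, Fintype.card_pi]
      simp [Fintype.card_fin]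
    · exact ⟨_, Finset.mem_image.mpr ⟨fun i => ⟨0, hm i⟩, Finset.mem_univ _, rfl⟩⟩
    · intro v hv
      obtain ⟨σ, _, rfl⟩ := Finset.mem_image.mp hv
      refine ⟨cvec e (fun k => 2 * ((σ k : ℕ) : ℝ)), cvec_ne_zero e _,
        max_singleton _ _ _ hv ?_⟩
      intro u hu hne
      obtain ⟨τ, _, rfl⟩ := Finset.mem_image.mp hu
      have hτσ : τ ≠ σ := fun h => hne (by rw [h])
      obtain ⟨k, hk⟩ := Function.ne_iff.mp hτσ
      rw [sum_inner, sum_inner]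
      simp only [inner_vtx_cvec]
      apply Finset.sum_lt_sum
      · intro i _
        nlinarith [sq_nonneg (((σ i : ℕ) : ℝ) - ((τ i : ℕ) : ℝ))]
      · refine ⟨k, Finset.mem_univ _, ?_⟩
        have hkr : ((τ k : ℕ) : ℝ) ≠ ((σ k : ℕ) : ℝ) :=
          Nat.cast_injective.ne (fun h => hk (Fin.val_injective h))
        have h0 : 0 < (((σ k : ℕ) : ℝ) - ((τ k : ℕ) : ℝ)) ^ 2 :=
          lt_of_le_of_ne (sq_nonneg _) (Ne.symm (pow_ne_zero 2 (sub_ne_zero.mpr (Ne.symm hkr))))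
        nlinarith [h0]
end
end

section
/- For every dimension d ≥ 4, every 1 ≤ n ≤ ⌊d/2⌋, and every choice of integers m_1,…,m_n ≥ 1, there exist polytopes P_1,…,P_n in ℝ^d with f_0(P_i) = m_i for each i (namely, convex hulls of pairwise distinct points on the moment curve t ↦ (t, t², …, t^d)), such that for all 0 ≤ k ≤ ⌊d/2⌋ − n the trivial upper bound for the number of k-faces is attained: f_k(P_1 + ⋯ + P_n) = Σ ∏_{i=1}^n C(m_i, s_i), where the sum ranges over all integer tuples (s_1,…,s_n) with 1 ≤ s_i ≤ m_i and s_1 + ⋯ + s_n = k + n, and C denotes the binomial coefficient. -/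
open Pointwise RealInnerProductSpace

noncomputable section

def momentCurve (d : ℕ) (t : ℝ) : E d :=
  (EuclideanSpace.equiv (Fin d) ℝ).symm (fun i => t ^ ((i : ℕ) + 1))

/-!
Write `P = P₁ + ⋯ + Pₙ` with `Pᵢ = conv {γ(T i j)}` for the moment curve `γ`. The face of `P`
maximizing `⟪·, c⟫` is the Minkowski sum of the faces of the `Pᵢ` maximizing `c`, so it is the
hull of the sums `∑ i, γ(T i (σ i))` with `σ i ∈ Aᵢ`, the index sets of the maximizers. Any `d`
points of the moment curve with distinct nonzero parameters are linearly independent, so such a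
face has dimension `∑ |Aᵢ| - n` as long as `∑ |Aᵢ| ≤ d`. Conversely, if `2 ∑ |Aᵢ| ≤ d`, then
`-∏ (t - T i j)²` over the chosen parameters has degree at most `d`, so up to its constant term it
is a linear functional along `γ`, and it exposes exactly the tuple `(Aᵢ)`. Hence for
`k + n ≤ d / 2` the `k`-faces of `P` correspond bijectively to the tuples of nonempty sets with
`∑ |Aᵢ| = k + n`, and counting these by their sizes gives `∑ ∏ C(mᵢ, sᵢ)`; the case `n = 1`,
`k = 0` gives `f₀(Pᵢ) = mᵢ`.
-/

section Maximizers

variable {d : ℕ}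

lemma convex_setOf_inner_le (c : E d) (r : ℝ) : Convex ℝ {z : E d | ⟪z, c⟫ ≤ r} :=
  convex_halfSpace_le ⟨fun _ _ => inner_add_left .., fun _ _ => real_inner_smul_left ..⟩ r

lemma isExposed_maximizers (P : Set (E d)) (c : E d) : IsExposed ℝ P (maximizers P c) :=
  fun _ => ⟨innerSL ℝ c, by ext; simp [maximizers, real_inner_comm]⟩

/-- By Krein–Milman, the exposed face is the closed convex hull of its extreme points, and these
are extreme points of `convexHull ℝ s`, hence lie in `s`. -/
lemma maximizers_convexHull {s : Set (E d)} (hs : s.Finite) (c : E d) :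
    maximizers (convexHull ℝ s) c = convexHull ℝ (maximizers s c) := by
  have hexp := isExposed_maximizers (convexHull ℝ s) c
  apply subset_antisymm
  · have hext : (maximizers (convexHull ℝ s) c).extremePoints ℝ ⊆ maximizers s c :=
      fun x hx => ⟨extremePoints_convexHull_subset
        (hexp.isExtreme.extremePoints_subset_extremePoints hx),
        fun y hy => hx.1.2 y (subset_convexHull ℝ s hy)⟩
    rw [← closure_convexHull_extremePoints (hexp.isCompact (hs.isCompact_convexHull ℝ))
      (hexp.convex (convex_convexHull ℝ s))]
    exact closure_minimal (convexHull_mono hext)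
      ((hs.subset fun x hx => hx.1).isClosed_convexHull ℝ)
  · refine convexHull_min (fun x hx => ⟨subset_convexHull ℝ s hx.1, fun y hy => ?_⟩)
      (hexp.convex (convex_convexHull ℝ s))
    exact convexHull_min (fun z hz => hx.2 z hz) (convex_setOf_inner_le c _) hy

lemma maximizers_zero (P : Set (E d)) : maximizers P 0 = P := by
  ext; simp [maximizers]

lemma isFace_maximizers (P : Set (E d)) (c : E d) : IsFace P (maximizers P c) := by
  rcases eq_or_ne c 0 with rfl | hc
  · exact Or.inr (Or.inl (maximizers_zero P))
  · exact Or.inr (Or.inr ⟨c, hc, rfl⟩)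

lemma IsFace.exists_eq_maximizers {P F : Set (E d)} (hF : IsFace P F) (hne : F.Nonempty) :
    ∃ c, F = maximizers P c := by
  rcases hF with rfl | rfl | ⟨c, -, rfl⟩
  · exact absurd hne Set.not_nonempty_empty
  · exact ⟨0, (maximizers_zero F).symm⟩
  · exact ⟨c, rfl⟩

open Classical in
def argmaxInner {κ : Type*} [Fintype κ] (w : κ → E d) (c : E d) : Finset κ :=
  {j | ∀ j', ⟪w j', c⟫ ≤ ⟪w j, c⟫}

lemma mem_argmaxInner {κ : Type*} [Fintype κ] {w : κ → E d} {c : E d} {j : κ} :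
    j ∈ argmaxInner w c ↔ ∀ j', ⟪w j', c⟫ ≤ ⟪w j, c⟫ := by
  simp [argmaxInner]

lemma maximizers_range {κ : Type*} [Fintype κ] (w : κ → E d) (c : E d) :
    maximizers (Set.range w) c = w '' argmaxInner w c := by
  ext x
  constructor
  · rintro ⟨⟨j, rfl⟩, hj⟩
    exact ⟨j, mem_argmaxInner.2 fun j' => hj _ ⟨j', rfl⟩, rfl⟩
  · rintro ⟨j, hj, rfl⟩
    exact ⟨⟨j, rfl⟩, Set.forall_mem_range.2 (mem_argmaxInner.1 hj)⟩

end Maximizers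

lemma Finset.sum_apply_update_sub {ι : Type*} [Fintype ι] [DecidableEq ι] {κ : ι → Type*}
    {M : Type*} [AddCommGroup M] (f : (i : ι) → κ i → M) (σ : (i : ι) → κ i) (i : ι) (j : κ i) :
    ∑ k, f k (Function.update σ i j k) - ∑ k, f k (σ k) = f i j - f i (σ i) := by
  simp_rw [Function.apply_update f]
  rw [Finset.sum_update_of_mem (Finset.mem_univ i), ← Finset.add_sum_erase _ _ (Finset.mem_univ i),
    Finset.sdiff_singleton_eq_erase]
  abel

lemma Function.update_mem_univ_pi {ι : Type*} [DecidableEq ι] {κ : ι → Type*}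
    {A : (i : ι) → Set (κ i)} {σ : (i : ι) → κ i} (hσ : σ ∈ Set.univ.pi A) {i : ι} {j : κ i}
    (hj : j ∈ A i) : Function.update σ i j ∈ Set.univ.pi A := by
  intro k _
  rcases eq_or_ne k i with rfl | hk
  · simpa using hj
  · simpa [Function.update_of_ne hk] using hσ k trivial

section SumHull

variable {d : ℕ} {ι : Type*} [Fintype ι] {κ : ι → Type*}

def sumHull (v : (i : ι) → κ i → E d) (A : (i : ι) → Finset (κ i)) : Set (E d) :=
  convexHull ℝ ((fun σ : (i : ι) → κ i => ∑ i, v i (σ i)) '' Set.univ.pi fun i => (A i : Set (κ i)))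

lemma sum_convexHull_range (v : (i : ι) → κ i → E d) :
    ∑ i, convexHull ℝ (Set.range (v i)) =
      convexHull ℝ (Set.range fun σ : (i : ι) → κ i => ∑ i, v i (σ i)) := by
  rw [← convexHull_sum]
  congr 1
  ext x
  simp only [Set.mem_fintype_sum, Set.mem_range]
  constructor
  · rintro ⟨g, hg, rfl⟩
    choose σ hσ using hg
    exact ⟨σ, by simp only [hσ]⟩
  · rintro ⟨σ, rfl⟩
    exact ⟨fun i => v i (σ i), fun i => ⟨σ i, rfl⟩, rfl⟩

lemma sumHull_nonempty_iff {v : (i : ι) → κ i → E d} {A : (i : ι) → Finset (κ i)} :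
    (sumHull v A).Nonempty ↔ ∀ i, (A i).Nonempty := by
  simp [sumHull, Set.univ_pi_nonempty_iff]

lemma sumHull_mono (v : (i : ι) → κ i → E d) {A B : (i : ι) → Finset (κ i)} (h : A ≤ B) :
    sumHull v A ⊆ sumHull v B :=
  convexHull_mono (Set.image_mono (Set.pi_mono fun i _ => Finset.coe_subset.2 (h i)))

variable [∀ i, Fintype (κ i)]

lemma sumHull_univ (v : (i : ι) → κ i → E d) :
    sumHull v (fun _ => Finset.univ) =
      convexHull ℝ (Set.range fun σ : (i : ι) → κ i => ∑ i, v i (σ i)) := by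
  simp [sumHull]

variable [DecidableEq ι]

lemma argmaxInner_sum (v : (i : ι) → κ i → E d) (c : E d) :
    argmaxInner (fun σ : (i : ι) → κ i => ∑ i, v i (σ i)) c =
      Fintype.piFinset fun i => argmaxInner (v i) c := by
  ext σ
  simp only [mem_argmaxInner, Fintype.mem_piFinset, sum_inner]
  constructor
  · intro h i j
    have := h (Function.update σ i j)
    have := Finset.sum_apply_update_sub (fun i j => ⟪v i j, c⟫) σ i j
    linarith
  · exact fun h τ => Finset.sum_le_sum fun i _ => h i (τ i)

lemma maximizers_sumHull_univ (v : (i : ι) → κ i → E d) (c : E d) :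
    maximizers (sumHull v fun _ => Finset.univ) c = sumHull v fun i => argmaxInner (v i) c := by
  rw [sumHull_univ, maximizers_convexHull (Set.finite_range _), maximizers_range, argmaxInner_sum,
    Fintype.coe_piFinset, sumHull]

lemma le_argmaxInner_of_sumHull_subset {v : (i : ι) → κ i → E d} {A : (i : ι) → Finset (κ i)}
    (hA : ∀ i, (A i).Nonempty) {c : E d}
    (h : sumHull v A ⊆ maximizers (sumHull v fun _ => Finset.univ) c) :
    A ≤ fun i => argmaxInner (v i) c := by
  intro i j hj
  choose σ hσ using hA
  have hupd := Function.update_mem_univ_pi (A := fun i => (A i : Set (κ i))) (fun i _ => hσ i)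
    (Finset.mem_coe.2 hj)
  have hmax := h (subset_convexHull ℝ _ (Set.mem_image_of_mem _ hupd))
  rw [sumHull_univ] at hmax
  have hσj : Function.update σ i j ∈ argmaxInner (fun σ : (i : ι) → κ i => ∑ i, v i (σ i)) c :=
    mem_argmaxInner.2 fun τ => hmax.2 _ (subset_convexHull ℝ _ (Set.mem_range_self τ))
  rw [argmaxInner_sum, Fintype.mem_piFinset] at hσj
  simpa using hσj i

end SumHull

section Dimension

open scoped Finset

variable {d : ℕ} {ι : Type*} [Fintype ι] {κ : ι → Type*}

lemma dimSet_convexHull (s : Set (E d)) :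
    dimSet (convexHull ℝ s) = Module.finrank ℝ (vectorSpan ℝ s) := by
  rw [dimSet, affineSpan_convexHull, direction_affineSpan]

lemma dimSet_mono {F G : Set (E d)} (h : F ⊆ G) : dimSet F ≤ dimSet G :=
  Submodule.finrank_mono (AffineSubspace.direction_le (affineSpan_mono ℝ h))

lemma vectorSpan_image_sum_pi [DecidableEq ι] [∀ i, DecidableEq (κ i)]
    (v : (i : ι) → κ i → E d) {A : (i : ι) → Finset (κ i)} {b : (i : ι) → κ i}
    (hb : ∀ i, b i ∈ A i) :
    vectorSpan ℝ
        ((fun σ : (i : ι) → κ i => ∑ i, v i (σ i)) '' Set.univ.pi fun i => (A i : Set (κ i))) =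
      Submodule.span ℝ ((fun p : Σ i, κ i => v p.1 p.2 - v p.1 (b p.1)) ''
        ↑(Finset.univ.sigma fun i => (A i).erase (b i))) := by
  have hb' : b ∈ Set.univ.pi fun i => (A i : Set (κ i)) := fun i _ => hb i
  rw [vectorSpan_eq_span_vsub_set_right ℝ (Set.mem_image_of_mem _ hb')]
  apply le_antisymm <;> rw [Submodule.span_le]
  · rintro _ ⟨_, ⟨σ, hσ, rfl⟩, rfl⟩
    change ∑ i, v i (σ i) - ∑ i, v i (b i) ∈ _
    rw [← Finset.sum_sub_distrib]
    refine Submodule.sum_mem _ fun i _ => ?_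
    by_cases h : σ i = b i
    · rw [h, sub_self]
      exact Submodule.zero_mem _
    · exact Submodule.subset_span ⟨⟨i, σ i⟩, by simpa [h] using hσ i trivial, rfl⟩
  · rintro _ ⟨⟨i, j⟩, hj, rfl⟩
    obtain ⟨hj, -⟩ : j ∈ A i ∧ j ≠ b i := by simpa using hj
    refine Submodule.subset_span ⟨_, Set.mem_image_of_mem _
      (Function.update_mem_univ_pi hb' (Finset.mem_coe.2 hj)), ?_⟩
    exact Finset.sum_apply_update_sub v b i j

/-- Modulo the span of the base points `v i (b i)`, each difference agrees with `v i j`. -/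
lemma linearIndepOn_sub_basepoint [∀ i, DecidableEq (κ i)] {v : (i : ι) → κ i → E d}
    {A : (i : ι) → Finset (κ i)}
    (hv : LinearIndepOn ℝ (fun p : Σ i, κ i => v p.1 p.2) ↑(Finset.univ.sigma A))
    {b : (i : ι) → κ i} (hb : ∀ i, b i ∈ A i) :
    LinearIndepOn ℝ (fun p : Σ i, κ i => v p.1 p.2 - v p.1 (b p.1))
      ↑(Finset.univ.sigma fun i => (A i).erase (b i)) := by
  set B : Set (Σ i, κ i) := Set.range fun i => ⟨i, b i⟩
  have hsplit : (↑(Finset.univ.sigma A) : Set (Σ i, κ i)) =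
      B ∪ ↑(Finset.univ.sigma fun i => (A i).erase (b i)) := by
    ext ⟨i, j⟩
    by_cases h : j = b i
    · subst h
      simp [B, hb]
    · simp [B, h, Ne.symm h]
  have hdisj : Disjoint B ↑(Finset.univ.sigma fun i => (A i).erase (b i)) := by
    rw [Set.disjoint_left]
    rintro _ ⟨i, rfl⟩
    simp
  rw [hsplit, linearIndepOn_union_iff_quotient hdisj] at hv
  refine LinearIndepOn.of_comp (Submodule.mkQ _) (hv.2.congr fun p _ => ?_)
  rw [Function.comp_apply, Function.comp_apply, map_sub, eq_sub_iff_add_eq, add_eq_left,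
    Submodule.mkQ_apply, Submodule.Quotient.mk_eq_zero]
  exact Submodule.subset_span ⟨⟨p.1, b p.1⟩, ⟨p.1, rfl⟩, rfl⟩

theorem dimSet_sumHull_add_card {v : (i : ι) → κ i → E d} {A : (i : ι) → Finset (κ i)}
    (hA : ∀ i, (A i).Nonempty)
    (hv : LinearIndepOn ℝ (fun p : Σ i, κ i => v p.1 p.2) ↑(Finset.univ.sigma A)) :
    dimSet (sumHull v A) + Fintype.card ι = ∑ i, #(A i) := by
  classical
  choose b hb using hA
  rw [sumHull, dimSet_convexHull, vectorSpan_image_sum_pi v hb, Set.image_eq_range,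
    finrank_span_eq_card (linearIndepOn_sub_basepoint hv hb)]
  simp only [Finset.coe_sort_coe, Fintype.card_coe]
  rw [Finset.card_sigma, ← Finset.card_univ, Finset.card_eq_sum_ones, ← Finset.sum_add_distrib]
  exact Finset.sum_congr rfl fun i _ => Finset.card_erase_add_one (hb i)

theorem exists_le_sum_card_eq {A : (i : ι) → Finset (κ i)} (hA : ∀ i, (A i).Nonempty) {N : ℕ}
    (h₁ : Fintype.card ι ≤ N) (h₂ : N ≤ ∑ i, #(A i)) :
    ∃ B ≤ A, (∀ i, (B i).Nonempty) ∧ ∑ i, #(B i) = N := by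
  classical
  choose b hb using hA
  set base : Finset (Σ i, κ i) := Finset.univ.image fun i => ⟨i, b i⟩
  have hbase : base ⊆ Finset.univ.sigma A := by
    simp [base, Finset.image_subset_iff, hb]
  obtain ⟨U, hbaseU, hU, rfl⟩ := Finset.exists_subsuperset_card_eq (n := N) hbase
    (by rwa [Finset.card_image_of_injective _ fun i i' h => congrArg Sigma.fst h, Finset.card_univ])
    (by rwa [Finset.card_sigma])
  refine ⟨fun i => U.preimage (Sigma.mk i) sigma_mk_injective.injOn, fun i j hj => ?_,
    fun i => ⟨b i, ?_⟩, ?_⟩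
  · simpa using hU (Finset.mem_preimage.1 hj)
  · exact Finset.mem_preimage.2 (hbaseU (Finset.mem_image_of_mem _ (Finset.mem_univ i)))
  · rw [← Finset.card_sigma, Finset.sigma_preimage_mk_of_subset U (Finset.subset_univ _)]

/-- If the tuple were larger, a subtuple of total size `k + card ι + 1` would already span a face
of dimension `k + 1`. -/
lemma sum_card_eq_of_dimSet_sumHull_eq {v : (i : ι) → κ i → E d}
    (hv : ∀ S : Finset (Σ i, κ i), #S ≤ d → LinearIndepOn ℝ (fun p : Σ i, κ i => v p.1 p.2) ↑S)
    {A : (i : ι) → Finset (κ i)} (hA : ∀ i, (A i).Nonempty) {k : ℕ} (hk : k + Fintype.card ι < d)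
    (hdim : dimSet (sumHull v A) = k) :
    ∑ i, #(A i) = k + Fintype.card ι := by
  by_contra hne
  rcases lt_or_gt_of_ne hne with hlt | hgt
  · have := dimSet_sumHull_add_card hA (hv _ (by rw [Finset.card_sigma]; omega))
    omega
  · obtain ⟨B, hBA, hB, hBcard⟩ := exists_le_sum_card_eq hA (N := k + Fintype.card ι + 1)
      (by omega) hgt
    have h₁ := dimSet_sumHull_add_card hB (hv _ (by rw [Finset.card_sigma]; omega))
    have h₂ := dimSet_mono (sumHull_mono v hBA)
    omega

end Dimension

section Faces

open scoped Finset

variable {d : ℕ} {ι : Type*} [Fintype ι] [DecidableEq ι] {κ : ι → Type*} [∀ i, Fintype (κ i)]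

def nonemptyTuples (κ : ι → Type*) [∀ i, Fintype (κ i)] (N : ℕ) :
    Finset ((i : ι) → Finset (κ i)) :=
  {A | (∀ i, (A i).Nonempty) ∧ ∑ i, #(A i) = N}

lemma mem_nonemptyTuples {N : ℕ} {A : (i : ι) → Finset (κ i)} :
    A ∈ nonemptyTuples κ N ↔ (∀ i, (A i).Nonempty) ∧ ∑ i, #(A i) = N := by
  simp [nonemptyTuples]

theorem card_nonemptyTuples (N : ℕ) :
    #(nonemptyTuples κ N) =
      ∑ s ∈ Fintype.piFinset (fun i => Finset.Icc 1 (Fintype.card (κ i))) with ∑ i, s i = N,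
        ∏ i, (Fintype.card (κ i)).choose (s i) := by
  classical
  have hsplit : nonemptyTuples κ N =
      (Fintype.piFinset (fun i => Finset.Icc 1 (Fintype.card (κ i))) |>.filter
        (∑ i, · i = N)).biUnion
        fun s => Fintype.piFinset fun i => Finset.powersetCard (s i) Finset.univ := by
    ext A
    simp only [mem_nonemptyTuples, Finset.mem_biUnion, Finset.mem_filter, Fintype.mem_piFinset,
      Finset.mem_powersetCard, Finset.mem_Icc]
    constructor
    · rintro ⟨hA, rfl⟩
      exact ⟨fun i => #(A i), ⟨fun i => ⟨(hA i).card_pos, Finset.card_le_univ _⟩, rfl⟩,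
        fun i => ⟨Finset.subset_univ _, rfl⟩⟩
    · rintro ⟨s, ⟨hs, rfl⟩, hA⟩
      refine ⟨fun i => Finset.card_pos.1 ((hA i).2 ▸ (hs i).1), ?_⟩
      simp only [(hA _).2]
  rw [hsplit, Finset.card_biUnion]
  · simp [Finset.card_powersetCard]
  · intro s _ t _ hst
    refine Finset.disjoint_left.2 fun A hs ht => hst (funext fun i => ?_)
    rw [Fintype.mem_piFinset] at hs ht
    exact (Finset.mem_powersetCard.1 (hs i)).2.symm.trans (Finset.mem_powersetCard.1 (ht i)).2

variable {v : (i : ι) → κ i → E d}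

theorem faces_sumHull_eq_image
    (hv : ∀ S : Finset (Σ i, κ i), #S ≤ d → LinearIndepOn ℝ (fun p : Σ i, κ i => v p.1 p.2) ↑S)
    {k : ℕ} (hk : k + Fintype.card ι < d)
    (hexp : ∀ A ∈ nonemptyTuples κ (k + Fintype.card ι),
      ∃ c : E d, (fun i => argmaxInner (v i) c) = A) :
    {F | IsFace (sumHull v fun _ => Finset.univ) F ∧ F.Nonempty ∧ dimSet F = k} =
      sumHull v '' nonemptyTuples κ (k + Fintype.card ι) := by
  ext F
  constructor
  · rintro ⟨hF, hne, hdim⟩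
    obtain ⟨c, rfl⟩ := hF.exists_eq_maximizers hne
    rw [maximizers_sumHull_univ] at hne hdim ⊢
    have hA := sumHull_nonempty_iff.1 hne
    exact ⟨_, mem_nonemptyTuples.2 ⟨hA, sum_card_eq_of_dimSet_sumHull_eq hv hA hk hdim⟩, rfl⟩
  · rintro ⟨A, hA, rfl⟩
    obtain ⟨hAne, hAcard⟩ := mem_nonemptyTuples.1 hA
    obtain ⟨c, hc⟩ := hexp A hA
    refine ⟨?_, sumHull_nonempty_iff.2 hAne, ?_⟩
    · rw [← hc, ← maximizers_sumHull_univ]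
      exact isFace_maximizers _ c
    · have := dimSet_sumHull_add_card hAne (hv _ (by rw [Finset.card_sigma]; omega))
      omega

theorem injOn_sumHull {N : ℕ}
    (hexp : ∀ A ∈ nonemptyTuples κ N, ∃ c : E d, (fun i => argmaxInner (v i) c) = A) :
    Set.InjOn (sumHull v) (nonemptyTuples κ N) := by
  have key : ∀ A ∈ nonemptyTuples κ N, ∀ B ∈ nonemptyTuples κ N,
      sumHull v A = sumHull v B → A ≤ B := by
    intro A hA B hB h
    obtain ⟨c, rfl⟩ := hexp B hB
    exact le_argmaxInner_of_sumHull_subset (mem_nonemptyTuples.1 hA).1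
      (h.trans (maximizers_sumHull_univ v c).symm).subset
  exact fun A hA B hB h => le_antisymm (key A hA B hB h) (key B hB A hA h.symm)

theorem fVec_sumHull
    (hv : ∀ S : Finset (Σ i, κ i), #S ≤ d → LinearIndepOn ℝ (fun p : Σ i, κ i => v p.1 p.2) ↑S)
    {k : ℕ} (hk : k + Fintype.card ι < d)
    (hexp : ∀ A ∈ nonemptyTuples κ (k + Fintype.card ι),
      ∃ c : E d, (fun i => argmaxInner (v i) c) = A) :
    fVec (sumHull v fun _ => Finset.univ) k =
      ∑ s ∈ Fintype.piFinset (fun i => Finset.Icc 1 (Fintype.card (κ i)))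
        with ∑ i, s i = k + Fintype.card ι, ∏ i, (Fintype.card (κ i)).choose (s i) := by
  rw [fVec, faces_sumHull_eq_image hv hk hexp, (injOn_sumHull hexp).ncard_image,
    Set.ncard_coe_finset, card_nonemptyTuples]

end Faces

section MomentCurve

open scoped Finset

variable {d : ℕ}

/-- The first `card κ` coordinates of the points form a Vandermonde matrix with rows scaled by
the nonzero `t j`. -/
theorem linearIndependent_momentCurve {κ : Type*} [Fintype κ] (hκ : Fintype.card κ ≤ d)
    {t : κ → ℝ} (ht : Function.Injective t) (ht0 : ∀ j, t j ≠ 0) :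
    LinearIndependent ℝ fun j => momentCurve d (t j) := by
  set e := Fintype.equivFin κ
  let π : E d →ₗ[ℝ] (Fin (Fintype.card κ) → ℝ) :=
    (LinearMap.funLeft ℝ ℝ (Fin.castLE hκ)).comp (EuclideanSpace.equiv (Fin d) ℝ).toLinearMap
  have hvdm : LinearIndependent ℝ (Matrix.vandermonde (t ∘ e.symm)) :=
    Matrix.linearIndependent_rows_of_det_ne_zero
      (Matrix.det_vandermonde_ne_zero_iff.mpr (ht.comp e.symm.injective))
  have hscaled := LinearIndependent.comp
    (hvdm.units_smul fun a => Units.mk0 _ (ht0 (e.symm a))) e e.injective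
  refine LinearIndependent.of_comp π ?_
  convert hscaled using 1
  ext j i
  change t j ^ ((i : ℕ) + 1) = t (e.symm (e j)) * t (e.symm (e j)) ^ (i : ℕ)
  simp [pow_succ, mul_comm]

lemma linearIndepOn_momentCurve {α : Type*} {t : α → ℝ} (ht : Function.Injective t)
    (ht0 : ∀ a, t a ≠ 0) (s : Finset α) (hs : #s ≤ d) :
    LinearIndepOn ℝ (fun a => momentCurve d (t a)) ↑s :=
  linearIndependent_momentCurve (by simpa using hs) (ht.comp Subtype.val_injective) fun a => ht0 a

open Polynomial in
lemma inner_momentCurve_coeff {p : ℝ[X]} (hp : p.natDegree ≤ d) (t : ℝ) :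
    ⟪momentCurve d t, (EuclideanSpace.equiv (Fin d) ℝ).symm fun i => p.coeff ((i : ℕ) + 1)⟫ =
      p.eval t - p.coeff 0 := by
  rw [eval_eq_sum_range' (Nat.lt_succ_of_le hp), Finset.sum_range_succ',
    ← Fin.sum_univ_eq_sum_range]
  simp [PiLp.inner_apply, momentCurve, mul_comm]

open Polynomial in
/-- With `q = ∏ r ∈ R, (X - r) ^ 2`, take for `c` the coefficients of `-q` without constant term:
then `⟪momentCurve d t, c⟫ = q 0 - q t`, and `q ≥ 0` vanishes exactly on `R`. -/
theorem exists_inner_momentCurve_le_and_eq_iff (R : Finset ℝ) (hR : 2 * #R ≤ d) :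
    ∃ c : E d, ∃ M : ℝ, ∀ t, ⟪momentCurve d t, c⟫ ≤ M ∧ (⟪momentCurve d t, c⟫ = M ↔ t ∈ R) := by
  set q : ℝ[X] := ∏ r ∈ R, (X - C r) ^ 2
  have hq : ∀ t, q.eval t = ∏ r ∈ R, (t - r) ^ 2 := by simp [q, eval_prod]
  have hdeg : q.natDegree ≤ d := by
    refine (natDegree_prod_le _ _).trans (le_trans ?_ hR)
    rw [mul_comm, ← smul_eq_mul, ← Finset.sum_const]
    exact Finset.sum_le_sum fun r _ => natDegree_pow_le.trans (by simp)
  refine ⟨-(EuclideanSpace.equiv (Fin d) ℝ).symm (fun i => q.coeff ((i : ℕ) + 1)), q.coeff 0,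
    fun t => ?_⟩
  have hnonneg : 0 ≤ q.eval t := hq t ▸ Finset.prod_nonneg fun r _ => sq_nonneg _
  have hzero : q.eval t = 0 ↔ t ∈ R := by simp [hq, Finset.prod_eq_zero_iff, sub_eq_zero]
  rw [inner_neg_right, inner_momentCurve_coeff hdeg, ← hzero]
  constructor
  · linarith
  · constructor <;> intro h <;> linarith

variable {ι : Type*} [Fintype ι] {κ : ι → Type*} [∀ i, Fintype (κ i)] {T : (i : ι) → κ i → ℝ}

theorem exists_argmaxInner_momentCurve_eq (hT : Function.Injective fun p : Σ i, κ i => T p.1 p.2)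
    {A : (i : ι) → Finset (κ i)} (hA : ∀ i, (A i).Nonempty) (hd : 2 * ∑ i, #(A i) ≤ d) :
    ∃ c : E d, (fun i => argmaxInner (fun j => momentCurve d (T i j)) c) = A := by
  classical
  set R := (Finset.univ.sigma A).image fun p => T p.1 p.2
  have hR : ∀ i j, T i j ∈ R ↔ j ∈ A i := by
    intro i j
    simp only [R, Finset.mem_image]
    constructor
    · rintro ⟨p, hp, hpe⟩
      obtain rfl : p = ⟨i, j⟩ := @hT p ⟨i, j⟩ hpe
      simpa using hp
    · exact fun hj => ⟨⟨i, j⟩, by simpa using hj, rfl⟩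
  have hRcard : #R = ∑ i, #(A i) := by
    rw [Finset.card_image_of_injective _ hT, Finset.card_sigma]
  obtain ⟨c, M, hc⟩ := exists_inner_momentCurve_le_and_eq_iff (d := d) R (hRcard ▸ hd)
  refine ⟨c, funext fun i => Finset.ext fun j => ?_⟩
  obtain ⟨j₀, hj₀⟩ := hA i
  have hM : ⟪momentCurve d (T i j₀), c⟫ = M := (hc _).2.2 ((hR i j₀).2 hj₀)
  rw [mem_argmaxInner, ← hR, ← (hc _).2]
  exact ⟨fun h => le_antisymm (hc _).1 (hM ▸ h j₀), fun h j' => h ▸ (hc _).1⟩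

theorem fVec_sum_convexHull_momentCurve [DecidableEq ι] [Nonempty ι]
    (hT : Function.Injective fun p : Σ i, κ i => T p.1 p.2) (hT0 : ∀ i j, T i j ≠ 0)
    {k : ℕ} (hk : k + Fintype.card ι ≤ d / 2) :
    fVec (∑ i, convexHull ℝ (Set.range fun j => momentCurve d (T i j))) k =
      ∑ s ∈ Fintype.piFinset (fun i => Finset.Icc 1 (Fintype.card (κ i)))
        with ∑ i, s i = k + Fintype.card ι, ∏ i, (Fintype.card (κ i)).choose (s i) := by
  have hι := Fintype.card_pos (α := ι)
  rw [sum_convexHull_range, ← sumHull_univ (fun i j => momentCurve d (T i j))]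
  exact fVec_sumHull (v := fun i j => momentCurve d (T i j))
    (fun S hS => linearIndepOn_momentCurve hT (fun p => hT0 p.1 p.2) S hS) (by omega)
    fun A hA => exists_argmaxInner_momentCurve_eq hT (mem_nonemptyTuples.1 hA).1
      (by rw [(mem_nonemptyTuples.1 hA).2]; omega)

end MomentCurve

lemma sum_piFinset_unit_choose (N : ℕ) :
    ∑ s ∈ Fintype.piFinset (fun _ : Unit => Finset.Icc 1 N) with s () = 1, N.choose (s ()) = N := by
  rcases Nat.eq_zero_or_pos N with rfl | hN
  · simp
  rw [Finset.sum_eq_single_of_mem (fun _ => 1) (by simp; omega)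
    fun s hs hne => (hne (funext fun _ => (Finset.mem_filter.1 hs).2)).elim]
  simp

theorem trivial_upper_bound_attained_cyclic_general (d n : ℕ)
    (hn1 : 1 ≤ n) (hn2 : n ≤ d / 2) (m : Fin n → ℕ) :
    ∃ T : (i : Fin n) → Fin (m i) → ℝ,
      (Function.Injective fun p : Σ i : Fin n, Fin (m i) => T p.1 p.2) ∧
      (∀ i, fVec (convexHull ℝ (Set.range fun j => momentCurve d (T i j))) 0 = m i) ∧
      ∀ k : ℕ, k ≤ d / 2 - n →
        fVec (∑ i, convexHull ℝ (Set.range fun j => momentCurve d (T i j))) k =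
          ∑ s ∈ (Fintype.piFinset fun i => Finset.Icc 1 (m i)).filter
              (fun s => ∑ i, s i = k + n),
            ∏ i, Nat.choose (m i) (s i) := by
  have : Nonempty (Fin n) := ⟨⟨0, hn1⟩⟩
  set e := Fintype.equivFin (Σ i, Fin (m i))
  set T : (i : Fin n) → Fin (m i) → ℝ := fun i j => (e ⟨i, j⟩ : ℕ) + 1
  have hT : Function.Injective fun p : Σ i, Fin (m i) => T p.1 p.2 :=
    fun p q h => e.injective (Fin.ext (by simpa [T] using h))
  have hT0 : ∀ i j, T i j ≠ 0 := fun i j => by positivity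
  refine ⟨T, hT, fun i => ?_, fun k hk => ?_⟩
  · -- `Pᵢ` alone is the Minkowski sum over the one-point index type `Unit`.
    have hTi : Function.Injective fun p : Σ _ : Unit, Fin (m i) => T i p.2 :=
      (hT.comp sigma_mk_injective).comp (Equiv.uniqueSigma fun _ : Unit => Fin (m i)).injective
    simpa [sum_piFinset_unit_choose] using
      fVec_sum_convexHull_momentCurve (d := d) (k := 0) hTi (fun _ => hT0 i) (by simp; omega)
  · simpa using fVec_sum_convexHull_momentCurve hT hT0 (k := k) (by simp; omega)

theorem trivial_upper_bound_attained_cyclic (d n : ℕ) (hd : 4 ≤ d)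
    (hn1 : 1 ≤ n) (hn2 : n ≤ d / 2) (m : Fin n → ℕ) (hm : ∀ i, 1 ≤ m i) :
    ∃ T : (i : Fin n) → Fin (m i) → ℝ,
      (Function.Injective fun p : Σ i : Fin n, Fin (m i) => T p.1 p.2) ∧
      (∀ i, fVec (convexHull ℝ (Set.range fun j => momentCurve d (T i j))) 0 = m i) ∧
      ∀ k : ℕ, k ≤ d / 2 - n →
        fVec (∑ i, convexHull ℝ (Set.range fun j => momentCurve d (T i j))) k =
          ∑ s ∈ (Fintype.piFinset fun i => Finset.Icc 1 (m i)).filter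
              (fun s => ∑ i, s i = k + n),
            ∏ i, Nat.choose (m i) (s i) :=
  trivial_upper_bound_attained_cyclic_general d n hn1 hn2 m
end
end
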